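/- arXiv:1208.4129 — 3 statements merged into one kernel-verified Lean document; each statement's English description precedes it below -/
import Mathlib

section
/- The closure of the graph of the standard Cremona transformation C(t₁:...:tₙ) = (1/t₁:...:1/tₙ) inside ℙ^{n-1} × ℙ^{n-1} is the subvariety cut out by the equations t₁t_{n+1} = t₂t_{n+2} = ... = tₙt_{2n}, where (t₁:...:tₙ) and (t_{n+1}:...:t_{2n}) are coordinates on the two factors. -/
open MvPolynomial

/-- A subset of `ℙ^{n-1} × ℙ^{n-1}` is Zariski closed if it is the common zero locus of
a family of bihomogeneous polynomials in the coordinates `(t₁:…:tₙ)` and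
`(t_{n+1}:…:t_{2n})` of the two factors. -/
def IsBiprojClosed (n : ℕ) (k : Type) [Field k]
    (A : Set (Projectivization k (Fin n → k) × Projectivization k (Fin n → k))) : Prop :=
  ∃ (ι : Type) (f : ι → MvPolynomial (Fin n ⊕ Fin n) k) (d : ι → ℕ × ℕ),
    (∀ i, (f i).IsWeightedHomogeneous
      (Sum.elim (fun _ => ((1 : ℕ), (0 : ℕ))) (fun _ => ((0 : ℕ), (1 : ℕ)))) (d i)) ∧
    A = {xy | ∀ i, MvPolynomial.eval (Sum.elim xy.1.rep xy.2.rep) (f i) = 0}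

/-- The graph of the standard Cremona transformation
`C(t₁:…:tₙ) = (1/t₁:…:1/tₙ)`, defined away from the coordinate hyperplanes. -/
def cremonaGraph (n : ℕ) (k : Type) [Field k] :
    Set (Projectivization k (Fin n → k) × Projectivization k (Fin n → k)) :=
  {xy | (∀ i, xy.1.rep i ≠ 0) ∧
    ∃ c : k, c ≠ 0 ∧ ∀ i, xy.2.rep i = c * (xy.1.rep i)⁻¹}

lemma cremona_eval_scale {n : ℕ} {k : Type} [Field k]
    {f : MvPolynomial (Fin n ⊕ Fin n) k} {d : ℕ × ℕ}
    (hf : f.IsWeightedHomogeneous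
      (Sum.elim (fun _ => ((1 : ℕ), (0 : ℕ))) (fun _ => ((0 : ℕ), (1 : ℕ)))) d)
    (a b : k) (u v : Fin n → k) :
    eval (Sum.elim (fun i => a * u i) (fun i => b * v i)) f
      = a ^ d.1 * b ^ d.2 * eval (Sum.elim u v) f := by
  rw [eval_eq', eval_eq', Finset.mul_sum]
  apply Finset.sum_congr rfl
  intro m hm
  have hw := hf (mem_support_iff.mp hm)
  have hwsum : Finsupp.weight
      (Sum.elim (fun _ => ((1 : ℕ), (0 : ℕ))) (fun _ => ((0 : ℕ), (1 : ℕ)))) m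
      = ∑ j : Fin n ⊕ Fin n, m j •
        (Sum.elim (fun _ => ((1 : ℕ), (0 : ℕ))) (fun _ => ((0 : ℕ), (1 : ℕ))) j) := by
    rw [Finsupp.weight_apply]
    exact Finsupp.sum_fintype _ _ (fun i => zero_smul _ _)
  rw [hwsum] at hw
  have h1 : ∑ i : Fin n, m (Sum.inl i) = d.1 := by
    have := congrArg Prod.fst hw
    rw [Prod.fst_sum, Fintype.sum_sum_type] at this
    simpa using this
  have h2 : ∑ i : Fin n, m (Sum.inr i) = d.2 := by
    have := congrArg Prod.snd hw
    rw [Prod.snd_sum, Fintype.sum_sum_type] at this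
    simpa using this
  rw [Fintype.prod_sum_type, Fintype.prod_sum_type]
  simp only [Sum.elim_inl, Sum.elim_inr, mul_pow]
  rw [Finset.prod_mul_distrib, Finset.prod_mul_distrib,
    Finset.prod_pow_eq_pow_sum, Finset.prod_pow_eq_pow_sum, h1, h2]
  ring


lemma cremona_closed_aux (n : ℕ) (hn : 1 ≤ n) (k : Type) [Field k] :
    ∃ (ι : Type) (f : ι → MvPolynomial (Fin n ⊕ Fin n) k) (d : ι → ℕ × ℕ),
    (∀ i, (f i).IsWeightedHomogeneous
      (Sum.elim (fun _ => ((1 : ℕ), (0 : ℕ))) (fun _ => ((0 : ℕ), (1 : ℕ)))) (d i)) ∧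
    {xy : Projectivization k (Fin n → k) × Projectivization k (Fin n → k) |
        ∀ i j, xy.1.rep i * xy.2.rep i = xy.1.rep j * xy.2.rep j}
      = {xy | ∀ i, MvPolynomial.eval (Sum.elim xy.1.rep xy.2.rep) (f i) = 0} := by
  classical
  refine ⟨Fin n × Fin n,
    fun p => X (Sum.inl p.1) * X (Sum.inr p.1) - X (Sum.inl p.2) * X (Sum.inr p.2),
    fun _ => (1, 1), fun p => ?_, ?_⟩
  · have hm : ∀ i : Fin n, ((X (Sum.inl i) * X (Sum.inr i) : MvPolynomial (Fin n ⊕ Fin n) k)).IsWeightedHomogeneous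
        (Sum.elim (fun _ => ((1 : ℕ), (0 : ℕ))) (fun _ => ((0 : ℕ), (1 : ℕ)))) (1, 1) := by
      intro i
      have := (isWeightedHomogeneous_X k
          (Sum.elim (fun _ => ((1 : ℕ), (0 : ℕ))) (fun _ => ((0 : ℕ), (1 : ℕ))))
          (Sum.inl i)).mul (isWeightedHomogeneous_X k _ (Sum.inr i))
      simpa using this
    have : (X (Sum.inl p.1) * X (Sum.inr p.1) - X (Sum.inl p.2) * X (Sum.inr p.2) :
        MvPolynomial (Fin n ⊕ Fin n) k) ∈ weightedHomogeneousSubmodule k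
        (Sum.elim (fun _ => ((1 : ℕ), (0 : ℕ))) (fun _ => ((0 : ℕ), (1 : ℕ)))) (1, 1) :=
      sub_mem ((mem_weightedHomogeneousSubmodule _ _ _ _).2 (hm p.1))
        ((mem_weightedHomogeneousSubmodule _ _ _ _).2 (hm p.2))
    exact (mem_weightedHomogeneousSubmodule _ _ _ _).1 this
  · ext xy
    simp only [Set.mem_setOf_eq, map_sub, map_mul, eval_X, Sum.elim_inl, Sum.elim_inr,
      sub_eq_zero, Prod.forall]


lemma cremona_min_aux (n : ℕ) (hn : 1 ≤ n) (k : Type) [Field k] [IsAlgClosed k]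
    (ι : Type) (f : ι → MvPolynomial (Fin n ⊕ Fin n) k) (d : ι → ℕ × ℕ)
    (hfhom : ∀ i, (f i).IsWeightedHomogeneous
      (Sum.elim (fun _ => ((1 : ℕ), (0 : ℕ))) (fun _ => ((0 : ℕ), (1 : ℕ)))) (d i))
    (hsub : cremonaGraph n k ⊆
      {xy | ∀ i, MvPolynomial.eval (Sum.elim xy.1.rep xy.2.rep) (f i) = 0}) :
    {xy : Projectivization k (Fin n → k) × Projectivization k (Fin n → k) |
        ∀ i j, xy.1.rep i * xy.2.rep i = xy.1.rep j * xy.2.rep j} ⊆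
      {xy | ∀ i, MvPolynomial.eval (Sum.elim xy.1.rep xy.2.rep) (f i) = 0} := by
  classical
  intro xy hxy idx
  simp only [Set.mem_setOf_eq] at hxy ⊢
  set x := xy.1.rep with hxdef
  set y := xy.2.rep with hydef
  have i0 : Fin n := ⟨0, hn⟩
  by_cases hc0 : x i0 * y i0 = 0
  · -- degenerate case: use limit argument
    have h0 : ∀ i, x i * y i = 0 := fun i => (hxy i i0).trans hc0
    set cp : Fin n ⊕ Fin n → Polynomial k := Sum.elim
      (fun i => if x i ≠ 0 then Polynomial.C (x i)
        else if y i ≠ 0 then Polynomial.C (y i)⁻¹ * Polynomial.X ^ 2 else Polynomial.X)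
      (fun i => if x i ≠ 0 then Polynomial.C (x i)⁻¹ * Polynomial.X ^ 2
        else if y i ≠ 0 then Polynomial.C (y i) else Polynomial.X) with hcp
    have key : ∀ s : k, s ≠ 0 →
        eval (Sum.elim (fun i => (cp (Sum.inl i)).eval s)
          (fun i => (cp (Sum.inr i)).eval s)) (f idx) = 0 := by
      intro s hs
      set us : Fin n → k := fun i => (cp (Sum.inl i)).eval s with hus
      set vs : Fin n → k := fun i => (cp (Sum.inr i)).eval s with hvs
      have hu : ∀ i, us i ≠ 0 := by
        intro i
        simp only [hus, hcp, Sum.elim_inl]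
        split_ifs with h1 h2
        · simpa using h1
        · simp [hs, inv_ne_zero h2]
        · simpa using hs
      have hv : ∀ i, vs i = s ^ 2 * (us i)⁻¹ := by
        intro i
        simp only [hvs, hus, hcp, Sum.elim_inl, Sum.elim_inr]
        split_ifs with h1 h2
        · simp only [Polynomial.eval_mul, Polynomial.eval_C, Polynomial.eval_pow,
            Polynomial.eval_X]
          ring
        · simp only [Polynomial.eval_mul, Polynomial.eval_C, Polynomial.eval_pow,
            Polynomial.eval_X]
          rw [mul_inv, inv_inv]
          field_simp
        · simp only [Polynomial.eval_X]
          field_simp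
      have husne : us ≠ 0 := fun h => hu ⟨0, hn⟩ (by rw [h]; rfl)
      have hvsne : vs ≠ 0 := by
        intro h
        have : vs ⟨0, hn⟩ = 0 := by rw [h]; rfl
        rw [hv ⟨0, hn⟩] at this
        exact (mul_ne_zero (pow_ne_zero 2 hs) (inv_ne_zero (hu ⟨0, hn⟩))) this
      obtain ⟨a, ha⟩ := Projectivization.exists_smul_eq_mk_rep k us husne
      obtain ⟨b, hb⟩ := Projectivization.exists_smul_eq_mk_rep k vs hvsne
      have hmem : (Projectivization.mk k us husne, Projectivization.mk k vs hvsne)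
          ∈ cremonaGraph n k := by
        refine ⟨fun i => ?_, (a : k) * b * s ^ 2,
          mul_ne_zero (mul_ne_zero (Units.ne_zero a) (Units.ne_zero b)) (pow_ne_zero 2 hs),
          fun i => ?_⟩
        · show (Projectivization.mk k us husne).rep i ≠ 0
          rw [← ha]
          simp only [Pi.smul_apply, Units.smul_def, smul_eq_mul]
          exact mul_ne_zero (Units.ne_zero a) (hu i)
        · show (Projectivization.mk k vs hvsne).rep i
            = (a : k) * b * s ^ 2 * ((Projectivization.mk k us husne).rep i)⁻¹
          rw [← ha, ← hb]
          simp only [Pi.smul_apply, Units.smul_def, smul_eq_mul]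
          rw [hv i, mul_inv]
          field_simp [hu i]
      have hz := hsub hmem idx
      simp only [Set.mem_setOf_eq] at hz
      rw [← ha, ← hb] at hz
      have : (Sum.elim (((a : kˣ) • us : Fin n → k)) ((b : kˣ) • vs))
          = Sum.elim (fun i => (a : k) * us i) (fun i => (b : k) * vs i) := by
        funext j; cases j <;> simp [Units.smul_def]
      rw [this, cremona_eval_scale (hfhom idx)] at hz
      have hane : (a : k) ^ (d idx).1 ≠ 0 := pow_ne_zero _ (Units.ne_zero a)
      have hbne : (b : k) ^ (d idx).2 ≠ 0 := pow_ne_zero _ (Units.ne_zero b)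
      exact (mul_eq_zero.mp hz).resolve_left (mul_ne_zero hane hbne)
    -- polynomial in s vanishes away from 0, hence everywhere
    set g : Polynomial k := MvPolynomial.aeval cp (f idx) with hgdef
    have hg : ∀ s : k, g.eval s = eval (fun j => (cp j).eval s) (f idx) := by
      intro s
      have h2 := MvPolynomial.comp_aeval_apply (R := k) (f := cp)
        (Polynomial.aeval s : Polynomial k →ₐ[k] k) (f idx)
      rw [hgdef]
      calc (MvPolynomial.aeval cp (f idx)).eval s
          = Polynomial.aeval s (MvPolynomial.aeval cp (f idx)) := by
            rw [Polynomial.coe_aeval_eq_eval]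
        _ = MvPolynomial.aeval (fun j => Polynomial.aeval s (cp j)) (f idx) := h2
        _ = eval (fun j => (cp j).eval s) (f idx) := by
            simp only [Polynomial.coe_aeval_eq_eval]
            rfl
    have hg0 : g = 0 := by
      apply Polynomial.eq_zero_of_infinite_isRoot
      apply Set.Infinite.mono (s := ({0}ᶜ : Set k))
      · intro s hs
        have hs' : s ≠ 0 := hs
        show g.IsRoot s
        rw [Polynomial.IsRoot, hg]
        have heq : (fun j => (cp j).eval s)
            = Sum.elim (fun i => (cp (Sum.inl i)).eval s) (fun i => (cp (Sum.inr i)).eval s) := by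
          funext j; cases j <;> rfl
        rw [heq]
        exact key s hs'
      · exact (Set.finite_singleton (0 : k)).infinite_compl
    have hfinal := hg 0
    rw [hg0, Polynomial.eval_zero] at hfinal
    have heval0 : (fun j => (cp j).eval 0) = Sum.elim x y := by
      funext j
      cases j with
      | inl i =>
        simp only [hcp, Sum.elim_inl]
        split_ifs with h1 h2
        · simp
        · simp only [Polynomial.eval_mul, Polynomial.eval_pow, Polynomial.eval_X,
            Polynomial.eval_C, Sum.elim_inl]
          push_neg at h1
          simp [h1]
        · push_neg at h1
          simp [h1]
      | inr i =>
        simp only [hcp, Sum.elim_inr]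
        split_ifs with h1 h2
        · have : y i = 0 := by
            rcases mul_eq_zero.mp (h0 i) with h | h
            · exact absurd h h1
            · exact h
          simp [this]
        · simp
        · push_neg at h2
          simp [h2]
    rw [heval0] at hfinal
    exact hfinal.symm
  · -- nondegenerate case: point lies in the graph
    have hc0' : x i0 * y i0 ≠ 0 := hc0
    have hxne : ∀ i, x i ≠ 0 := fun i =>
      left_ne_zero_of_mul (by rw [hxy i i0]; exact hc0')
    have hmem : xy ∈ cremonaGraph n k := by
      refine ⟨hxne, x i0 * y i0, hc0', fun i => ?_⟩
      show y i = x i0 * y i0 * (x i)⁻¹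
      rw [← hxy i i0, mul_comm (x i) (y i), mul_assoc, mul_inv_cancel₀ (hxne i), mul_one]
    exact hsub hmem idx

/-- the closure of the graph of the Cremona transformation in
`ℙ^{n-1} × ℙ^{n-1}` is the subvariety `G(C)` cut out by the equations
`t₁t_{n+1} = t₂t_{n+2} = ⋯ = tₙt_{2n}`; i.e. `G(C)` is closed, contains the graph,
and is contained in every closed set containing the graph. -/
theorem cremona_graph_closure (n : ℕ) (hn : 1 ≤ n) (k : Type) [Field k] [IsAlgClosed k] :
    IsBiprojClosed n k
      {xy | ∀ i j, xy.1.rep i * xy.2.rep i = xy.1.rep j * xy.2.rep j} ∧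
    cremonaGraph n k ⊆
      {xy | ∀ i j, xy.1.rep i * xy.2.rep i = xy.1.rep j * xy.2.rep j} ∧
    ∀ A, IsBiprojClosed n k A → cremonaGraph n k ⊆ A →
      {xy : Projectivization k (Fin n → k) × Projectivization k (Fin n → k) |
        ∀ i j, xy.1.rep i * xy.2.rep i = xy.1.rep j * xy.2.rep j} ⊆ A := by
  classical
  refine ⟨?_, ?_, ?_⟩
  · exact cremona_closed_aux n hn k
  · rintro ⟨P, Q⟩ ⟨hne, c, hc, hy⟩ i j
    simp only [Set.mem_setOf_eq]
    have hval : ∀ i, P.rep i * (c * (P.rep i)⁻¹) = c := fun i => by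
      rw [mul_left_comm, mul_inv_cancel₀ (hne i), mul_one]
    rw [hy i, hy j, hval i, hval j]
  · rintro A ⟨ι, f, d, hfhom, rfl⟩ hsub
    exact cremona_min_aux n hn k ι f d hfhom hsub
end

section
/- The Cremona transformation C restricts to a biregular isomorphism X_Γ \ Σₙ → X_{Γ^∨} \ Σₙ between the graph hypersurface of a connected planar graph Γ and that of its dual, away from the union of coordinate hyperplanes Σₙ ⊂ ℙ^{n-1}; consequently [X_Γ \ Σₙ] = [X_{Γ^∨} \ Σₙ] in the Grothendieck ring. -/
/-- A multigraph: vertices `V`, edges `E`, each edge `e` has endpoints `fst e` and `snd e`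
(loops and parallel edges allowed). -/
structure Multigraph where
  V : Type
  E : Type
  fst : E → V
  snd : E → V

/-- Adjacency of two vertices through an edge belonging to the edge set `S`. -/
def Multigraph.adjIn (G : Multigraph) (S : Set G.E) (u v : G.V) : Prop :=
  ∃ e ∈ S, (G.fst e = u ∧ G.snd e = v) ∨ (G.fst e = v ∧ G.snd e = u)

/-- The edge set `S` connects the whole vertex set of `G`. -/
def Multigraph.ConnectsIn (G : Multigraph) (S : Set G.E) : Prop :=
  ∀ u v : G.V, Relation.ReflTransGen (G.adjIn S) u v

/-- A spanning tree of `G`: a minimal connecting edge set. -/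
def Multigraph.IsSpanningTree (G : Multigraph) (S : Set G.E) : Prop :=
  G.ConnectsIn S ∧ ∀ e ∈ S, ¬ G.ConnectsIn (S \ {e})

/-- The edge set `S` contains a cycle: some edge of `S` has its endpoints still
connected after its removal from `S`. -/
def Multigraph.HasCycleIn (G : Multigraph) (S : Set G.E) : Prop :=
  ∃ e ∈ S, Relation.ReflTransGen (G.adjIn (S \ {e})) (G.fst e) (G.snd e)

open scoped Classical in
/-- The Kirchhoff graph polynomial `Ψ_Γ = ∑_{T spanning tree} ∏_{e ∉ T} t_e`. -/
noncomputable def Multigraph.kirchhoff (G : Multigraph) [Fintype G.E] [DecidableEq G.E] :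
    MvPolynomial G.E ℤ :=
  ∑ T ∈ Finset.univ.filter (fun T : Finset G.E => G.IsSpanningTree ↑T),
    ∏ e ∈ Tᶜ, MvPolynomial.X e

/-- The graph hypersurface `X_Γ = {t ∈ ℙ^{n-1} | Ψ_Γ(t) = 0}`. -/
noncomputable def Multigraph.hypersurface (G : Multigraph) [Fintype G.E] [DecidableEq G.E]
    (k : Type) [Field k] : Set (Projectivization k (G.E → k)) :=
  {x | MvPolynomial.eval₂ (Int.castRingHom k) x.rep G.kirchhoff = 0}

/-- `Σ_n`, the union of the coordinate hyperplanes in `ℙ^{n-1}`. -/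
def coordHyperplanes (k : Type) [Field k] (E : Type) :
    Set (Projectivization k (E → k)) :=
  {x | ∃ e, x.rep e = 0}

/-- `G'` is (combinatorially) a planar dual of `G` along the edge bijection `φ`:
spanning trees of `G` correspond exactly to complements of spanning trees of `G'`. -/
def IsDualPair (G G' : Multigraph) [Fintype G.E] [DecidableEq G.E] [DecidableEq G'.E]
    (φ : G.E ≃ G'.E) : Prop :=
  ∀ T : Finset G.E, G.IsSpanningTree ↑T ↔ G'.IsSpanningTree ↑(Tᶜ.image φ)

/-- `B ⊆ ℙ^{n-1}` is the image of `A ⊆ ℙ^{n-1}` under the Cremona transformation,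
via a bijection `f : A ≃ B`: for every `x ∈ A`, the coordinates of `f x` are
proportional to the inverses of those of `x`, i.e. `xᵢ·(f x)ᵢ` is independent of `i`. -/
def CremonaIso {k : Type} [Field k] {E E' : Type} (φ : E ≃ E')
    (A : Set (Projectivization k (E → k))) (B : Set (Projectivization k (E' → k))) : Prop :=
  ∃ f : A ≃ B, ∀ (x : A) (e e' : E),
    (x : Projectivization k (E → k)).rep e *
        ((f x : Projectivization k (E' → k))).rep (φ e) =
      (x : Projectivization k (E → k)).rep e' *
        ((f x : Projectivization k (E' → k))).rep (φ e')

/-!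
On the torus `∏ tₑ ≠ 0`, duality pairs each spanning tree `T` of `Γ` with the spanning tree
`φ(Tᶜ)` of `Γ^∨`, so `(∏ tₑ) · Ψ_{Γ^∨}(t⁻¹) = Ψ_Γ(t)`: the Cremona map sends `X_Γ \ Σₙ` into
`X_{Γ^∨} \ Σₙ` and, the dual pairing being symmetric, back again, and it is an involution there.
Points of `ℙ^{n-1}` are tested on an arbitrary representative, so this also needs `Ψ_Γ` to be
homogeneous, i.e. all spanning trees to have the same size: each one gives a tree on the
vertices with `|T| + 1 = |V|` edges.
-/

theorem Finset.compl_image_equiv {α β : Type*} [Fintype α] [Fintype β] [DecidableEq α]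
    [DecidableEq β] (φ : α ≃ β) (s : Finset α) : (s.image φ)ᶜ = sᶜ.image φ := by
  ext b
  obtain ⟨a, rfl⟩ := φ.surjective b
  simp

theorem Finset.image_compl_image_symm_compl {α β : Type*} [Fintype α] [Fintype β] [DecidableEq α]
    [DecidableEq β] (φ : α ≃ β) (s : Finset β) : (sᶜ.image φ.symm)ᶜ.image φ = s := by
  rw [← compl_image_equiv, image_image, φ.self_comp_symm, image_id, compl_compl]

theorem MvPolynomial.IsHomogeneous.eval₂_smul {σ R S : Type*} [CommSemiring R] [CommSemiring S]
    {p : MvPolynomial σ R} {n : ℕ} (hp : p.IsHomogeneous n) (f : R →+* S) (c : S)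
    (v : σ → S) : MvPolynomial.eval₂ f (c • v) p = c ^ n * MvPolynomial.eval₂ f v p := by
  rw [eval₂_eq, eval₂_eq, Finset.mul_sum]
  refine Finset.sum_congr rfl fun d hd => ?_
  have hdeg : ∑ i ∈ d.support, d i = n := by
    rw [← Finsupp.degree_apply, Finsupp.degree_eq_weight_one]
    exact hp (mem_support_iff.mp hd)
  simp only [Pi.smul_apply, smul_eq_mul, mul_pow, Finset.prod_mul_distrib,
    Finset.prod_pow_eq_pow_sum, hdeg]
  ring

namespace Projectivization

open scoped LinearAlgebra.Projectivization

variable {k : Type} [Field k] {E E' : Type}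

theorem notMem_coordHyperplanes_iff {x : ℙ k (E → k)} :
    x ∉ coordHyperplanes k E ↔ ∀ e, x.rep e ≠ 0 := by
  simp [coordHyperplanes]

theorem inv_comp_rep_ne_zero (φ : E ≃ E') (x : ℙ k (E → k)) :
    (fun e' => (x.rep (φ.symm e'))⁻¹) ≠ 0 := by
  obtain ⟨e, he⟩ := Function.ne_iff.mp x.rep_nonzero
  exact Function.ne_iff.mpr ⟨φ e, by simpa using he⟩

/-- Only a meaningful Cremona image on the torus: elsewhere `0⁻¹ = 0` gives a junk value. -/
noncomputable def cremona (φ : E ≃ E') (x : ℙ k (E → k)) : ℙ k (E' → k) :=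
  mk k _ (inv_comp_rep_ne_zero φ x)

theorem exists_cremona_rep_eq_smul (φ : E ≃ E') (x : ℙ k (E → k)) :
    ∃ c : kˣ, (cremona φ x).rep = c • fun e' => (x.rep (φ.symm e'))⁻¹ :=
  (exists_smul_eq_mk_rep k _ (inv_comp_rep_ne_zero φ x)).imp fun _ h => h.symm

theorem cremona_notMem_coordHyperplanes (φ : E ≃ E') {x : ℙ k (E → k)}
    (hx : x ∉ coordHyperplanes k E) : cremona φ x ∉ coordHyperplanes k E' := by
  obtain ⟨c, hc⟩ := exists_cremona_rep_eq_smul φ x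
  rw [notMem_coordHyperplanes_iff] at hx ⊢
  intro e'
  rw [hc, Pi.smul_apply, Units.smul_def, smul_eq_mul]
  exact mul_ne_zero c.ne_zero (inv_ne_zero (hx _))

theorem rep_mul_cremona_rep (φ : E ≃ E') {x : ℙ k (E → k)} (hx : x ∉ coordHyperplanes k E) :
    ∃ c : kˣ, ∀ e, x.rep e * (cremona φ x).rep (φ e) = c := by
  obtain ⟨c, hc⟩ := exists_cremona_rep_eq_smul φ x
  refine ⟨c, fun e => ?_⟩
  rw [hc, Pi.smul_apply, Equiv.symm_apply_apply, Units.smul_def, smul_eq_mul,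
    mul_left_comm, mul_inv_cancel₀ (notMem_coordHyperplanes_iff.mp hx e), mul_one]

theorem cremona_symm_cremona (φ : E ≃ E') {x : ℙ k (E → k)} (hx : x ∉ coordHyperplanes k E) :
    cremona φ.symm (cremona φ x) = x := by
  obtain ⟨c, hc⟩ := rep_mul_cremona_rep φ hx
  conv_rhs => rw [← mk_rep x]
  refine (mk_eq_mk_iff k _ _ _ x.rep_nonzero).mpr ⟨c⁻¹, funext fun e => ?_⟩
  have hxe := notMem_coordHyperplanes_iff.mp hx e
  rw [Equiv.symm_symm, Units.smul_def, Pi.smul_apply, smul_eq_mul, Units.val_inv_eq_inv_val,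
    ← hc e, mul_inv, mul_right_comm, inv_mul_cancel₀ hxe, one_mul]

theorem cremonaIso_of_mapsTo (φ : E ≃ E') {A : Set (ℙ k (E → k))} {B : Set (ℙ k (E' → k))}
    (hA : A ⊆ (coordHyperplanes k E)ᶜ) (hB : B ⊆ (coordHyperplanes k E')ᶜ)
    (hAB : Set.MapsTo (cremona φ) A B) (hBA : Set.MapsTo (cremona φ.symm) B A) :
    CremonaIso φ A B := by
  refine ⟨⟨fun x => ⟨_, hAB x.2⟩, fun y => ⟨_, hBA y.2⟩, fun x => ?_, fun y => ?_⟩,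
    fun x e e' => ?_⟩
  · exact Subtype.ext (cremona_symm_cremona φ (hA x.2))
  · simpa using Subtype.ext (cremona_symm_cremona φ.symm (hB y.2))
  · obtain ⟨c, hc⟩ := rep_mul_cremona_rep φ (hA x.2)
    exact (hc e).trans (hc e').symm

end Projectivization

namespace Multigraph

open Relation SimpleGraph

variable {G : Multigraph} {S T : Set G.E} {e : G.E} {u v : G.V}

def ends (G : Multigraph) (e : G.E) : Sym2 G.V := s(G.fst e, G.snd e)

theorem adjIn_iff : G.adjIn S u v ↔ ∃ e ∈ S, G.ends e = s(u, v) := by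
  simp only [adjIn, ends, Sym2.eq_iff]

theorem reflTransGen_adjIn_comm :
    ReflTransGen (G.adjIn S) u v ↔ ReflTransGen (G.adjIn S) v u :=
  have : Std.Symm (G.adjIn S) := ⟨fun _ _ h => by
    obtain ⟨e, he, h⟩ := adjIn_iff.mp h
    exact adjIn_iff.mpr ⟨e, he, h.trans Sym2.eq_swap⟩⟩
  ⟨Std.Symm.symm _ _, Std.Symm.symm _ _⟩

theorem ConnectsIn.diff_singleton (hS : G.ConnectsIn S) (he : G.ends e = s(u, v))
    (huv : ReflTransGen (G.adjIn (S \ {e})) u v) : G.ConnectsIn (S \ {e}) := fun a b =>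
  (hS a b).lift' id fun c d hcd => by
    obtain ⟨f, hf, hfcd⟩ := adjIn_iff.mp hcd
    by_cases hfe : f = e
    · subst hfe
      rcases Sym2.eq_iff.mp (hfcd.symm.trans he) with ⟨rfl, rfl⟩ | ⟨rfl, rfl⟩
      · exact huv
      · exact reflTransGen_adjIn_comm.mp huv
    · exact .single (adjIn_iff.mpr ⟨f, ⟨hf, hfe⟩, hfcd⟩)

theorem IsSpanningTree.not_reflTransGen (hT : G.IsSpanningTree T) (he : e ∈ T)
    (hends : G.ends e = s(u, v)) : ¬ ReflTransGen (G.adjIn (T \ {e})) u v := fun huv =>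
  hT.2 e he (hT.1.diff_singleton hends huv)

theorem IsSpanningTree.not_isDiag (hT : G.IsSpanningTree T) (he : e ∈ T) :
    ¬ (G.ends e).IsDiag := fun hdiag =>
  have hfst : G.fst e = G.snd e := hdiag
  hT.not_reflTransGen he (u := G.fst e) (by rw [ends, hfst]) .refl

theorem IsSpanningTree.injOn_ends (hT : G.IsSpanningTree T) : Set.InjOn G.ends T := by
  intro e he f hf hef
  by_contra hne
  exact hT.not_reflTransGen hf rfl (.single (adjIn_iff.mpr ⟨e, ⟨he, hne⟩, hef⟩))

theorem ConnectsIn.finite (hS : S.Finite) (h : G.ConnectsIn S) : Finite G.V := by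
  cases isEmpty_or_nonempty G.V with
  | inl _ => infer_instance
  | inr hV =>
    obtain ⟨u⟩ := hV
    refine Set.finite_univ_iff.mp
      (((hS.image G.fst).union (hS.image G.snd)).insert u |>.subset fun v _ => ?_)
    rcases (h u v).cases_tail with rfl | ⟨c, -, e, he, ⟨-, rfl⟩ | ⟨rfl, -⟩⟩
    · exact Set.mem_insert _ _
    · exact Or.inr (Or.inr ⟨e, he, rfl⟩)
    · exact Or.inr (Or.inl ⟨e, he, rfl⟩)

def toSimpleGraph (G : Multigraph) (S : Set G.E) : SimpleGraph G.V :=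
  fromEdgeSet (G.ends '' S)

theorem reachable_toSimpleGraph (h : ReflTransGen (G.adjIn S) u v) :
    (G.toSimpleGraph S).Reachable u v := by
  induction h with
  | refl => rfl
  | @tail b c _ hbc ih =>
    obtain ⟨e, he, hends⟩ := adjIn_iff.mp hbc
    by_cases hbc' : b = c
    · exact hbc' ▸ ih
    · exact ih.trans (Adj.reachable ((fromEdgeSet_adj _).mpr ⟨⟨e, he, hends⟩, hbc'⟩))

theorem reflTransGen_adjIn_of_reachable {s : Set (Sym2 G.V)} (hs : s ⊆ G.ends '' S)
    (h : (fromEdgeSet s).Reachable u v) : ReflTransGen (G.adjIn S) u v := by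
  rw [reachable_iff_reflTransGen] at h
  refine ReflTransGen.mono (fun a b hab => adjIn_iff.mpr ?_) _ _ h
  obtain ⟨e, he, hends⟩ := hs ((fromEdgeSet_adj _).mp hab).1
  exact ⟨e, he, hends⟩

theorem IsSpanningTree.isTree [Nonempty G.V] (hT : G.IsSpanningTree T) :
    (G.toSimpleGraph T).IsTree := by
  refine ⟨connected_iff _ |>.mpr ⟨fun u v => reachable_toSimpleGraph (hT.1 u v), ‹_›⟩, ?_⟩
  refine isAcyclic_iff_forall_adj_isBridge.mpr fun v w hvw => isBridge_iff.mpr fun hre => ?_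
  obtain ⟨⟨e, he, hends⟩, -⟩ := (fromEdgeSet_adj _).mp hvw
  rw [deleteEdges, toSimpleGraph, ← fromEdgeSet_sdiff] at hre
  refine hT.not_reflTransGen he hends (reflTransGen_adjIn_of_reachable ?_ hre)
  rintro _ ⟨⟨f, hf, rfl⟩, hfe⟩
  exact ⟨f, ⟨hf, fun h => hfe (h ▸ hends)⟩, rfl⟩

theorem IsSpanningTree.edgeSet_toSimpleGraph (hT : G.IsSpanningTree T) :
    (G.toSimpleGraph T).edgeSet = G.ends '' T := by
  rw [toSimpleGraph, edgeSet_fromEdgeSet, sdiff_eq_left, Set.disjoint_left]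
  rintro _ ⟨e, he, rfl⟩
  exact hT.not_isDiag he

theorem IsSpanningTree.card_add_one [Fintype G.V] [Nonempty G.V] {T : Finset G.E}
    (hT : G.IsSpanningTree T) : T.card + 1 = Fintype.card G.V := by
  have : Fintype (G.toSimpleGraph T).edgeSet := Fintype.ofFinite _
  rw [← hT.isTree.card_edgeFinset, ← Set.ncard_coe_finset, ← hT.injOn_ends.ncard_image,
    ← hT.edgeSet_toSimpleGraph, ← coe_edgeFinset, Set.ncard_coe_finset]

theorem IsSpanningTree.card_eq {T₁ T₂ : Finset G.E} (h₁ : G.IsSpanningTree T₁)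
    (h₂ : G.IsSpanningTree T₂) : T₁.card = T₂.card := by
  cases isEmpty_or_nonempty G.V with
  | inl _ =>
    have hempty {T : Finset G.E} (hT : G.IsSpanningTree T) : T = ∅ :=
      Finset.eq_empty_of_forall_notMem fun e he => hT.2 e he fun u => isEmptyElim u
    rw [hempty h₁, hempty h₂]
  | inr _ =>
    have := h₁.1.finite T₁.finite_toSet
    have := Fintype.ofFinite G.V
    have := h₁.card_add_one
    have := h₂.card_add_one
    omega

open scoped Classical in
theorem eval₂_kirchhoff {S : Type*} [CommRing S] (G : Multigraph) [Fintype G.E]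
    [DecidableEq G.E] (v : G.E → S) :
    MvPolynomial.eval₂ (Int.castRingHom S) v G.kirchhoff =
      ∑ T ∈ Finset.univ.filter (fun T : Finset G.E => G.IsSpanningTree T), ∏ e ∈ Tᶜ, v e := by
  simp only [kirchhoff, MvPolynomial.eval₂_sum, MvPolynomial.eval₂_prod, MvPolynomial.eval₂_X]

theorem kirchhoff_isHomogeneous [Fintype G.E] [DecidableEq G.E] :
    ∃ n, G.kirchhoff.IsHomogeneous n := by
  classical
  by_cases h : ∃ T : Finset G.E, G.IsSpanningTree T
  · obtain ⟨T₀, hT₀⟩ := h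
    refine ⟨Fintype.card G.E - T₀.card, MvPolynomial.IsHomogeneous.sum _ _ _ fun T hT => ?_⟩
    have hT := (Finset.mem_filter.mp hT).2
    convert MvPolynomial.IsHomogeneous.prod _ _ _ fun e _ => MvPolynomial.isHomogeneous_X ℤ e
    rw [Finset.sum_const, smul_eq_mul, mul_one, Finset.card_compl, hT.card_eq hT₀]
  · exact ⟨0, MvPolynomial.IsHomogeneous.sum _ _ _ fun T hT =>
      absurd ⟨T, (Finset.mem_filter.mp hT).2⟩ h⟩

end Multigraph

namespace IsDualPair

open Projectivization

variable {G G' : Multigraph} [Fintype G.E] [DecidableEq G.E] [Fintype G'.E] [DecidableEq G'.E]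
  {φ : G.E ≃ G'.E}

theorem symm (h : IsDualPair G G' φ) : IsDualPair G' G φ.symm := fun T' => by
  rw [h, Finset.image_compl_image_symm_compl]

open scoped Classical in
theorem eval₂_kirchhoff {S : Type*} [CommRing S] (h : IsDualPair G G' φ) (w : G'.E → S) :
    MvPolynomial.eval₂ (Int.castRingHom S) w G'.kirchhoff =
      ∑ T ∈ Finset.univ.filter (fun T : Finset G.E => G.IsSpanningTree T), ∏ e ∈ T, w (φ e) := by
  rw [G'.eval₂_kirchhoff]
  refine Finset.sum_nbij' (fun T' => T'ᶜ.image φ.symm) (fun T => Tᶜ.image φ) ?_ ?_ ?_ ?_ ?_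
  · intro T' hT'
    simpa using (h.symm T').mp (Finset.mem_filter.mp hT').2
  · intro T hT
    simpa using (h T).mp (Finset.mem_filter.mp hT).2
  · intro T' _
    exact Finset.image_compl_image_symm_compl φ T'
  · intro T _
    simpa using Finset.image_compl_image_symm_compl φ.symm T
  · intro T' _
    rw [Finset.prod_image φ.symm.injective.injOn]
    simp

theorem prod_mul_eval₂_kirchhoff_inv {k : Type*} [Field k] (h : IsDualPair G G' φ)
    (v : G.E → k) (hv : ∀ e, v e ≠ 0) :
    (∏ e, v e) * MvPolynomial.eval₂ (Int.castRingHom k) (fun e' => (v (φ.symm e'))⁻¹)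
      G'.kirchhoff = MvPolynomial.eval₂ (Int.castRingHom k) v G.kirchhoff := by
  rw [h.eval₂_kirchhoff, G.eval₂_kirchhoff, Finset.mul_sum]
  refine Finset.sum_congr rfl fun T _ => ?_
  simp only [Equiv.symm_apply_apply]
  rw [← Finset.prod_mul_prod_compl T, mul_right_comm, ← Finset.prod_mul_distrib,
    Finset.prod_eq_one fun e _ => mul_inv_cancel₀ (hv e), one_mul]

theorem mapsTo_cremona (h : IsDualPair G G' φ) (k : Type) [Field k] :
    Set.MapsTo (cremona φ) (G.hypersurface k \ coordHyperplanes k G.E)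
      (G'.hypersurface k \ coordHyperplanes k G'.E) := by
  rintro x ⟨hX, hx⟩
  refine ⟨?_, cremona_notMem_coordHyperplanes φ hx⟩
  obtain ⟨c, hc⟩ := exists_cremona_rep_eq_smul φ x
  obtain ⟨n, hn⟩ := G'.kirchhoff_isHomogeneous
  have hprod : ∏ e, x.rep e ≠ 0 :=
    Finset.prod_ne_zero_iff.mpr fun e _ => notMem_coordHyperplanes_iff.mp hx e
  have hinv := h.prod_mul_eval₂_kirchhoff_inv x.rep (notMem_coordHyperplanes_iff.mp hx)
  rw [show MvPolynomial.eval₂ _ x.rep G.kirchhoff = 0 from hX, mul_eq_zero] at hinv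
  show MvPolynomial.eval₂ _ (cremona φ x).rep G'.kirchhoff = 0
  rw [hc, Units.smul_def, hn.eval₂_smul, hinv.resolve_left hprod, mul_zero]

end IsDualPair

theorem cremona_iso_of_graph_hypersurfaces_general
    (G G' : Multigraph) [Fintype G.E] [DecidableEq G.E] [Fintype G'.E] [DecidableEq G'.E]
    (φ : G.E ≃ G'.E) (hdual : IsDualPair G G' φ)
    (k : Type) [Field k] :
    CremonaIso φ (G.hypersurface k \ coordHyperplanes k G.E)
      (G'.hypersurface k \ coordHyperplanes k G'.E) ∧
    ∀ (R : Type) [CommRing R]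
      (cl : Set (Projectivization k (G.E → k)) → R)
      (cl' : Set (Projectivization k (G'.E → k)) → R),
      (∀ A B, CremonaIso φ A B → cl A = cl' B) →
      cl (G.hypersurface k \ coordHyperplanes k G.E) =
        cl' (G'.hypersurface k \ coordHyperplanes k G'.E) := by
  have hiso := Projectivization.cremonaIso_of_mapsTo φ (Set.sdiff_subset_compl _ _)
    (Set.sdiff_subset_compl _ _) (hdual.mapsTo_cremona k) (hdual.symm.mapsTo_cremona k)
  exact ⟨hiso, fun _ _ _ _ hcl => hcl _ _ hiso⟩

/-- the Cremona transformation restricts to a (biregular) isomorphism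
`X_Γ \ Σₙ → X_{Γ^∨} \ Σₙ` between the graph hypersurface of a connected planar
graph and that of its dual, away from the coordinate hyperplanes; consequently
`[X_Γ \ Σₙ] = [X_{Γ^∨} \ Σₙ]` in the Grothendieck ring (for any class functions
invariant under Cremona isomorphisms). -/
theorem cremona_iso_of_graph_hypersurfaces
    (G G' : Multigraph) [Fintype G.E] [DecidableEq G.E] [Fintype G'.E] [DecidableEq G'.E]
    (φ : G.E ≃ G'.E) (hconn : G.ConnectsIn Set.univ) (hdual : IsDualPair G G' φ)
    (k : Type) [Field k] :
    CremonaIso φ (G.hypersurface k \ coordHyperplanes k G.E)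
      (G'.hypersurface k \ coordHyperplanes k G'.E) ∧
    ∀ (R : Type) [CommRing R]
      (cl : Set (Projectivization k (G.E → k)) → R)
      (cl' : Set (Projectivization k (G'.E → k)) → R),
      (∀ A B, CremonaIso φ A B → cl A = cl' B) →
      cl (G.hypersurface k \ coordHyperplanes k G.E) =
        cl' (G'.hypersurface k \ coordHyperplanes k G'.E) :=
  cremona_iso_of_graph_hypersurfaces_general G G' φ hdual k
end

section
/- If a connected graph Γ has a separating vertex such that each of the two resulting components contains a cycle, then the graph polynomial factors as the product of the graph polynomials of the two components, each non-constant; hence the graph hypersurface X_Γ is reducible. -/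
/-- The subgraph of `G` on a vertex set `W` with edge set `S` (all edges of `S`
having both endpoints in `W`). -/
def Multigraph.restrict (G : Multigraph) [DecidableEq G.E] (W : Set G.V) (S : Finset G.E)
    (h : ∀ e ∈ S, G.fst e ∈ W ∧ G.snd e ∈ W) : Multigraph where
  V := W
  E := {e // e ∈ S}
  fst := fun e => ⟨G.fst e, (h e e.2).1⟩
  snd := fun e => ⟨G.snd e, (h e e.2).2⟩

instance (G : Multigraph) [DecidableEq G.E] (W : Set G.V) (S : Finset G.E)
    (h : ∀ e ∈ S, G.fst e ∈ W ∧ G.snd e ∈ W) : Fintype (G.restrict W S h).E :=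
  inferInstanceAs (Fintype {e // e ∈ S})

instance (G : Multigraph) [DecidableEq G.E] (W : Set G.V) (S : Finset G.E)
    (h : ∀ e ∈ S, G.fst e ∈ W ∧ G.snd e ∈ W) : DecidableEq (G.restrict W S h).E :=
  inferInstanceAs (DecidableEq {e // e ∈ S})

/-!
Connectivity of an edge set splits along the separation: a path of `Γ` is retracted onto either
side by collapsing the other side to the separating vertex, which turns every edge of the other
side into a loop; conversely, within its own side every vertex reaches the separating vertex.
Minimality splits as well, so the spanning trees of `Γ` are exactly the unions of spanning trees
of the two sides, and `T ↦ (T ∩ S, T \ S)` turns `Ψ_Γ` into the product. A side containing a cycle is not its own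
spanning tree, so its polynomial vanishes at `0`, while at `1` it counts spanning trees and is
nonzero: it is not constant.
-/

open Relation MvPolynomial

theorem Set.preimage_val_sdiff_singleton_val {α : Type*} {p : α → Prop} (T : Set α)
    (x : Subtype p) :
    (Subtype.val ⁻¹' (T \ {x.val}) : Set (Subtype p)) = Subtype.val ⁻¹' T \ {x} := by
  ext
  simp [Subtype.ext_iff]

theorem Set.preimage_val_sdiff_singleton_of_not {α : Type*} {p : α → Prop} (T : Set α) {e : α}
    (he : ¬ p e) : (Subtype.val ⁻¹' (T \ {e}) : Set (Subtype p)) = Subtype.val ⁻¹' T := by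
  ext x
  simp only [Set.mem_preimage, Set.mem_sdiff, Set.mem_singleton_iff, and_iff_left_iff_imp]
  rintro - rfl
  exact he x.2

open scoped Classical in
noncomputable def Set.retractOnto {α : Type*} (W : Set α) (a : W) (v : α) : W :=
  if hv : v ∈ W then ⟨v, hv⟩ else a

theorem Set.retractOnto_of_mem {α : Type*} {W : Set α} (a : W) {v : α} (hv : v ∈ W) :
    W.retractOnto a v = ⟨v, hv⟩ :=
  dif_pos hv

theorem Finset.coe_subtype_eq_preimage {α : Type*} (p : α → Prop) [DecidablePred p]
    (T : Finset α) : (↑(T.subtype p) : Set (Subtype p)) = Subtype.val ⁻¹' ↑T := by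
  ext
  simp

@[simps]
def Finset.splitEquiv {α : Type*} [Fintype α] [DecidableEq α] (S : Finset α) :
    Finset α ≃ Finset S × Finset ↥Sᶜ where
  toFun T := (T.subtype (· ∈ S), T.subtype (· ∈ Sᶜ))
  invFun p := p.1.map (.subtype _) ∪ p.2.map (.subtype _)
  left_inv T := by
    ext e
    by_cases e ∈ S <;> simp [*]
  right_inv p := by
    ext x
    · simp
    · simp [Finset.mem_compl.1 x.2]

theorem MvPolynomial.rename_prod_X_compl_subtype {α R : Type*} [Fintype α] [DecidableEq α]
    [CommSemiring R] (S T : Finset α) :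
    rename Subtype.val (∏ e ∈ (T.subtype (· ∈ S))ᶜ, X e : MvPolynomial S R) =
      ∏ e ∈ Tᶜ with e ∈ S, X e := by
  have hcompl : (T.subtype (· ∈ S))ᶜ = Tᶜ.subtype (· ∈ S) := by
    ext
    simp
  rw [map_prod, hcompl, ← Finset.prod_subtype_eq_prod_filter]
  simp only [rename_X]

theorem MvPolynomial.sum_prod_X_compl_eq_mul {α R : Type*} [Fintype α] [DecidableEq α]
    [CommSemiring R] (S : Finset α) {P : Finset α → Prop} {P₁ : Finset S → Prop}
    {P₂ : Finset ↥Sᶜ → Prop} [DecidablePred P] [DecidablePred P₁] [DecidablePred P₂]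
    (hP : ∀ T, P T ↔ P₁ (T.subtype (· ∈ S)) ∧ P₂ (T.subtype (· ∈ Sᶜ))) :
    ∑ T with P T, ∏ e ∈ Tᶜ, (X e : MvPolynomial α R) =
      rename Subtype.val (∑ T with P₁ T, ∏ e ∈ Tᶜ, X e) *
        rename Subtype.val (∑ T with P₂ T, ∏ e ∈ Tᶜ, X e) := by
  rw [map_sum, map_sum, Finset.sum_mul_sum, ← Finset.sum_product', ← Finset.filter_product]
  refine Finset.sum_equiv S.splitEquiv (fun T => by simp [hP]) (fun T _ => ?_)
  simp only [Finset.splitEquiv_apply, rename_prod_X_compl_subtype, Finset.mem_compl]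
  exact (Finset.prod_filter_mul_prod_filter_not _ _ _).symm

namespace Multigraph

variable {G : Multigraph}

instance (S : Set G.E) : Std.Symm (G.adjIn S) where
  symm _ _ := fun ⟨e, he, h⟩ => ⟨e, he, h.symm⟩

theorem reflTransGen_adjIn_symm {S : Set G.E} {u v : G.V} (h : ReflTransGen (G.adjIn S) u v) :
    ReflTransGen (G.adjIn S) v u :=
  symm h

theorem adjIn_mono {S S' : Set G.E} (h : S ⊆ S') : G.adjIn S ≤ G.adjIn S' :=
  fun _ _ ⟨e, he, hends⟩ => ⟨e, h he, hends⟩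

theorem ConnectsIn.mono {S S' : Set G.E} (hS : G.ConnectsIn S) (h : S ⊆ S') :
    G.ConnectsIn S' :=
  fun u v => ReflTransGen.mono (adjIn_mono h) _ _ (hS u v)

theorem isSpanningTree_iff_minimal {T : Set G.E} :
    G.IsSpanningTree T ↔ Minimal G.ConnectsIn T :=
  (Set.minimal_iff_forall_sdiff_singleton fun _ _ hT hTS => hT.mono hTS).symm

theorem exists_isSpanningTree [Finite G.E] (h : G.ConnectsIn Set.univ) :
    ∃ T, G.IsSpanningTree T := by
  obtain ⟨T, -, hT⟩ := exists_minimal_le_of_wellFoundedLT _ _ h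
  exact ⟨T, isSpanningTree_iff_minimal.2 hT⟩

theorem reflTransGen_adjIn_sdiff {T : Set G.E} {e : G.E}
    (he : ReflTransGen (G.adjIn (T \ {e})) (G.fst e) (G.snd e)) :
    ReflTransGen (G.adjIn T) ≤ ReflTransGen (G.adjIn (T \ {e})) :=
  reflTransGen_closed fun u v ⟨f, hf, hends⟩ => by
    by_cases hfe : f = e
    · subst hfe
      rcases hends with ⟨rfl, rfl⟩ | ⟨rfl, rfl⟩
      exacts [he, symm he]
    · exact .single ⟨f, ⟨hf, hfe⟩, hends⟩

theorem not_isSpanningTree_of_hasCycleIn {T : Set G.E} (h : G.HasCycleIn T) :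
    ¬ G.IsSpanningTree T := fun ⟨hT, hmin⟩ =>
  let ⟨e, he, hcyc⟩ := h
  hmin e he fun u v => reflTransGen_adjIn_sdiff hcyc _ _ (hT u v)

section Restrict

variable [DecidableEq G.E] {W : Set G.V} {A : Finset G.E}
  {hA : ∀ e ∈ A, G.fst e ∈ W ∧ G.snd e ∈ W}

theorem reflTransGen_of_restrict {T : Set G.E} {u v : W}
    (huv : ReflTransGen ((G.restrict W A hA).adjIn (Subtype.val ⁻¹' T)) u v) :
    ReflTransGen (G.adjIn T) u v :=
  huv.lift Subtype.val fun _ _ ⟨e, he, hends⟩ =>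
    ⟨e.val, he, hends.imp (And.imp (congrArg Subtype.val) (congrArg Subtype.val))
      (And.imp (congrArg Subtype.val) (congrArg Subtype.val))⟩

theorem reflTransGen_restrict_of_reflTransGen {T : Set G.E} (π : G.V → W)
    (hπ : ∀ v (hv : v ∈ W), π v = ⟨v, hv⟩) (hT : ∀ e ∈ T, e ∉ A → π (G.fst e) = π (G.snd e))
    {u v : G.V} (huv : ReflTransGen (G.adjIn T) u v) :
    ReflTransGen ((G.restrict W A hA).adjIn (Subtype.val ⁻¹' T)) (π u) (π v) := by
  have hedge : ∀ e ∈ T, ReflTransGen ((G.restrict W A hA).adjIn (Subtype.val ⁻¹' T))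
      (π (G.fst e)) (π (G.snd e)) := by
    intro e heT
    by_cases heA : e ∈ A
    · rw [hπ _ (hA e heA).1, hπ _ (hA e heA).2]
      exact .single ⟨⟨e, heA⟩, heT, .inl ⟨rfl, rfl⟩⟩
    · rw [hT e heT heA]
      exact .refl
  refine huv.lift' π fun u v ⟨e, heT, hends⟩ => ?_
  show ReflTransGen _ (π u) (π v)
  rcases hends with ⟨rfl, rfl⟩ | ⟨rfl, rfl⟩
  exacts [hedge e heT, reflTransGen_adjIn_symm (hedge e heT)]

theorem hasCycleIn_restrict (h : G.HasCycleIn A) : (G.restrict W A hA).HasCycleIn Set.univ := by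
  obtain ⟨e, he, hcyc⟩ := h
  refine ⟨⟨e, he⟩, trivial, ?_⟩
  have hpath := reflTransGen_restrict_of_reflTransGen (hA := hA)
    (W.retractOnto ⟨_, (hA e he).1⟩) (fun _ => W.retractOnto_of_mem _)
    (fun f hf hfA => absurd hf.1 hfA) hcyc
  rw [W.retractOnto_of_mem _ (hA e he).1, W.retractOnto_of_mem _ (hA e he).2] at hpath
  have hedges :
      (Subtype.val ⁻¹' (↑A \ {e}) : Set (G.restrict W A hA).E) = Set.univ \ {⟨e, he⟩} := by
    change (Subtype.val ⁻¹' (↑A \ {e}) : Set ↥A) = Set.univ \ {⟨e, he⟩}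
    ext
    simp [Subtype.ext_iff]
  rwa [hedges] at hpath

theorem connectsIn_restrict_of_connectsIn {W' : Set G.V} {a : G.V}
    (hA : ∀ e ∈ A, G.fst e ∈ W ∧ G.snd e ∈ W) (hA' : ∀ e ∉ A, G.fst e ∈ W' ∧ G.snd e ∈ W')
    (hWW' : W ∩ W' = {a}) {T : Set G.E} (hT : G.ConnectsIn T) :
    (G.restrict W A hA).ConnectsIn (Subtype.val ⁻¹' T) := by
  have ha : a ∈ W ∩ W' := hWW' ▸ rfl
  have hcollapse : ∀ v ∈ W', W.retractOnto ⟨a, ha.1⟩ v = ⟨a, ha.1⟩ := by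
    intro v hv
    by_cases hvW : v ∈ W
    · rw [W.retractOnto_of_mem _ hvW, Subtype.mk.injEq, ← Set.mem_singleton_iff, ← hWW']
      exact ⟨hvW, hv⟩
    · exact dif_neg hvW
  intro u v
  have hpath := reflTransGen_restrict_of_reflTransGen (hA := hA) (W.retractOnto ⟨a, ha.1⟩)
    (fun _ => W.retractOnto_of_mem _)
    (fun e _ he => (hcollapse _ (hA' e he).1).trans (hcollapse _ (hA' e he).2).symm)
    (hT u.1 v.1)
  rwa [W.retractOnto_of_mem _ u.2, W.retractOnto_of_mem _ v.2] at hpath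

end Restrict

section Separation

variable [DecidableEq G.E] [Fintype G.E] {W₁ W₂ : Set G.V} {a : G.V} {S : Finset G.E}
  (hWunion : W₁ ∪ W₂ = Set.univ) (hWinter : W₁ ∩ W₂ = {a})
  (h₁ : ∀ e ∈ S, G.fst e ∈ W₁ ∧ G.snd e ∈ W₁) (h₂ : ∀ e ∈ Sᶜ, G.fst e ∈ W₂ ∧ G.snd e ∈ W₂)
include hWunion hWinter

theorem connectsIn_iff_of_separation (T : Set G.E) :
    G.ConnectsIn T ↔ (G.restrict W₁ S h₁).ConnectsIn (Subtype.val ⁻¹' T) ∧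
      (G.restrict W₂ Sᶜ h₂).ConnectsIn (Subtype.val ⁻¹' T) := by
  refine ⟨fun hT => ⟨?_, ?_⟩, fun ⟨hT₁, hT₂⟩ => ?_⟩
  · exact connectsIn_restrict_of_connectsIn h₁ (fun e he => h₂ e (Finset.mem_compl.2 he))
      hWinter hT
  · exact connectsIn_restrict_of_connectsIn h₂ (fun e he => h₁ e (Finset.notMem_compl.1 he))
      (Set.inter_comm W₁ W₂ ▸ hWinter) hT
  · have ha : a ∈ W₁ ∩ W₂ := hWinter ▸ rfl
    have hreach : ∀ w, ReflTransGen (G.adjIn T) w a := by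
      intro w
      rcases (hWunion ▸ Set.mem_univ w : w ∈ W₁ ∪ W₂) with hw | hw
      · exact reflTransGen_of_restrict (hT₁ ⟨w, hw⟩ ⟨a, ha.1⟩)
      · exact reflTransGen_of_restrict (hT₂ ⟨w, hw⟩ ⟨a, ha.2⟩)
    exact fun u v => (hreach u).trans (reflTransGen_adjIn_symm (hreach v))

theorem isSpanningTree_iff_of_separation (T : Set G.E) :
    G.IsSpanningTree T ↔ (G.restrict W₁ S h₁).IsSpanningTree (Subtype.val ⁻¹' T) ∧
      (G.restrict W₂ Sᶜ h₂).IsSpanningTree (Subtype.val ⁻¹' T) := by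
  have hC := connectsIn_iff_of_separation hWunion hWinter h₁ h₂
  constructor
  · rintro ⟨hT, hmin⟩
    obtain ⟨hT₁, hT₂⟩ := (hC T).1 hT
    refine ⟨⟨hT₁, fun x hx hx' => hmin x.1 hx ((hC _).2 ⟨?_, ?_⟩)⟩,
      ⟨hT₂, fun y hy hy' => hmin y.1 hy ((hC _).2 ⟨?_, ?_⟩)⟩⟩
    · exact Set.preimage_val_sdiff_singleton_val T x ▸ hx'
    · exact Set.preimage_val_sdiff_singleton_of_not T (Finset.notMem_compl.2 x.2) ▸ hT₂
    · exact Set.preimage_val_sdiff_singleton_of_not T (Finset.mem_compl.1 y.2) ▸ hT₁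
    · exact Set.preimage_val_sdiff_singleton_val T y ▸ hy'
  · rintro ⟨⟨hT₁, hmin₁⟩, ⟨hT₂, hmin₂⟩⟩
    refine ⟨(hC T).2 ⟨hT₁, hT₂⟩, fun e he he' => ?_⟩
    obtain ⟨he₁, he₂⟩ := (hC _).1 he'
    by_cases heS : e ∈ S
    · exact hmin₁ ⟨e, heS⟩ he (Set.preimage_val_sdiff_singleton_val T ⟨e, heS⟩ ▸ he₁)
    · exact hmin₂ ⟨e, Finset.mem_compl.2 heS⟩ he
        (Set.preimage_val_sdiff_singleton_val T ⟨e, Finset.mem_compl.2 heS⟩ ▸ he₂)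

theorem kirchhoff_eq_mul_of_separation :
    G.kirchhoff = rename Subtype.val (G.restrict W₁ S h₁).kirchhoff *
      rename Subtype.val (G.restrict W₂ Sᶜ h₂).kirchhoff := by
  classical
  exact sum_prod_X_compl_eq_mul S fun T =>
    Finset.coe_subtype_eq_preimage (· ∈ S) T ▸ Finset.coe_subtype_eq_preimage (· ∈ Sᶜ) T ▸
      isSpanningTree_iff_of_separation hWunion hWinter h₁ h₂ T

end Separation

section Kirchhoff

variable [Fintype G.E] [DecidableEq G.E]

theorem eval_zero_kirchhoff (h : ¬ G.IsSpanningTree Set.univ) : eval 0 G.kirchhoff = 0 := by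
  simp only [kirchhoff, map_sum, map_prod, eval_X, Pi.zero_apply]
  refine Finset.sum_eq_zero fun T hT => ?_
  obtain ⟨e, he⟩ : Tᶜ.Nonempty := by
    rw [Finset.nonempty_iff_ne_empty, Ne, Finset.compl_eq_empty_iff]
    rintro rfl
    simp_all
  exact Finset.prod_eq_zero he rfl

theorem eval_one_kirchhoff_ne_zero (h : ∃ T, G.IsSpanningTree T) : eval 1 G.kirchhoff ≠ 0 := by
  obtain ⟨T, hT⟩ := h
  simp only [kirchhoff, map_sum, map_prod, eval_X, Pi.one_apply, Finset.prod_const_one,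
    Finset.sum_const, nsmul_eq_mul, mul_one, Nat.cast_ne_zero, Finset.card_ne_zero]
  exact ⟨T.toFinite.toFinset, by simpa using hT⟩

theorem totalDegree_kirchhoff_ne_zero (hconn : G.ConnectsIn Set.univ)
    (hcyc : G.HasCycleIn Set.univ) : G.kirchhoff.totalDegree ≠ 0 := by
  intro h
  rw [totalDegree_eq_zero_iff_eq_C] at h
  have h₀ := eval_zero_kirchhoff (not_isSpanningTree_of_hasCycleIn hcyc)
  have h₁ := eval_one_kirchhoff_ne_zero (exists_isSpanningTree hconn)
  rw [h, eval_C] at h₀ h₁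
  exact h₁ h₀

end Kirchhoff

end Multigraph

theorem separating_vertex_gives_reducible_general
    (G : Multigraph) [Fintype G.E] [DecidableEq G.E]
    (hconn : G.ConnectsIn Set.univ)
    (W₁ W₂ : Set G.V) (a : G.V) (S : Finset G.E)
    (hWunion : W₁ ∪ W₂ = Set.univ) (hWinter : W₁ ∩ W₂ = {a})
    (h₁ : ∀ e ∈ S, G.fst e ∈ W₁ ∧ G.snd e ∈ W₁)
    (h₂ : ∀ e ∈ Sᶜ, G.fst e ∈ W₂ ∧ G.snd e ∈ W₂)
    (hc₁ : G.HasCycleIn ↑S) (hc₂ : G.HasCycleIn ↑(Sᶜ)) :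
    G.kirchhoff =
      MvPolynomial.rename Subtype.val ((G.restrict W₁ S h₁).kirchhoff) *
        MvPolynomial.rename Subtype.val ((G.restrict W₂ Sᶜ h₂).kirchhoff) ∧
    ((G.restrict W₁ S h₁).kirchhoff).totalDegree ≠ 0 ∧
    ((G.restrict W₂ Sᶜ h₂).kirchhoff).totalDegree ≠ 0 := by
  obtain ⟨hconn₁, hconn₂⟩ :=
    (Multigraph.connectsIn_iff_of_separation hWunion hWinter h₁ h₂ Set.univ).1 hconn
  exact ⟨Multigraph.kirchhoff_eq_mul_of_separation hWunion hWinter h₁ h₂,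
    Multigraph.totalDegree_kirchhoff_ne_zero hconn₁ (Multigraph.hasCycleIn_restrict hc₁),
    Multigraph.totalDegree_kirchhoff_ne_zero hconn₂ (Multigraph.hasCycleIn_restrict hc₂)⟩

/-- if a connected graph `Γ` has a separating vertex `a` (a separation
into subgraphs on vertex sets `W₁`, `W₂` with `W₁ ∩ W₂ = {a}`, the edges split as
`S` and `Sᶜ`) such that each of the two components contains a cycle, then the graph
polynomial factors as the product of the graph polynomials of the two components,
each non-constant; hence the graph hypersurface `X_Γ` is reducible. -/
theorem separating_vertex_gives_reducible
    (G : Multigraph) [Fintype G.V] [Fintype G.E] [DecidableEq G.E]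
    (hconn : G.ConnectsIn Set.univ)
    (W₁ W₂ : Set G.V) (a : G.V) (S : Finset G.E)
    (hWunion : W₁ ∪ W₂ = Set.univ) (hWinter : W₁ ∩ W₂ = {a})
    (h₁ : ∀ e ∈ S, G.fst e ∈ W₁ ∧ G.snd e ∈ W₁)
    (h₂ : ∀ e ∈ Sᶜ, G.fst e ∈ W₂ ∧ G.snd e ∈ W₂)
    (hc₁ : G.HasCycleIn ↑S) (hc₂ : G.HasCycleIn ↑(Sᶜ)) :
    G.kirchhoff =
      MvPolynomial.rename Subtype.val ((G.restrict W₁ S h₁).kirchhoff) *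
        MvPolynomial.rename Subtype.val ((G.restrict W₂ Sᶜ h₂).kirchhoff) ∧
    ((G.restrict W₁ S h₁).kirchhoff).totalDegree ≠ 0 ∧
    ((G.restrict W₂ Sᶜ h₂).kirchhoff).totalDegree ≠ 0 :=
  separating_vertex_gives_reducible_general G hconn W₁ W₂ a S hWunion hWinter h₁ h₂ hc₁ hc₂
end
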